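/- Let k ≥ 1, let w ∈ {right, down}^{k−1} be the step word of an abstract G-stair Γ, let d be its number of down steps (so Γ has height d + 1), and let L = w ++ [right] ++ w be the step word of the decreasing linking stair of Γ. For every m with 1 ≤ m ≤ k, the number of down steps among L_m, …, L_{m+k−2} equals d − 1 if L_{m−1} is a down step, and equals d if L_{m−1} is a right step. Equivalently (equivalence (2) ⟺ (3) of the Proposition on decreasing linking stairs): a G-substair Γ′ of the decreasing linking stair of Γ satisfies height(Γ′) = height(Γ) − 1 if and only if Γ′ has a horizontal left cut. -/
import Mathlib


/-- A step of a stair: a right step `+(1,0)` or a down step `+(0,-1)`. -/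
inductive Step
  | right
  | down
deriving DecidableEq, BEq

instance : LawfulBEq Step where
  eq_of_beq {a b} h := by cases a <;> cases b <;> first | rfl | exact absurd h (by decide)
  rfl {a} := by cases a <;> rfl

/-- Let `w` be the step word (of length `k-1`) of an abstract `G`-stair with
`d` down steps (so height `d+1`), and let `L = w ++ [right] ++ w` be the step word of its
decreasing linking stair.  For `1 ≤ m ≤ k`, the number of down steps among `L_m, …, L_{m+k-2}`
(the step word of the `G`-substair at position `m`) equals `d - 1` if `L_{m-1}` is a down step
(horizontal left cut) and `d` if `L_{m-1}` is a right step (vertical left cut). -/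
theorem stmt4 (k : ℕ) (hk : 1 ≤ k) (w : List Step) (hw : w.length = k - 1)
    (d : ℕ) (hd : d = w.count Step.down)
    (L : List Step) (hL : L = w ++ [Step.right] ++ w)
    (m : ℕ) (hm1 : 1 ≤ m) (hmk : m ≤ k) :
    (L[m - 1]? = some Step.down → ((L.drop m).take (k - 1)).count Step.down = d - 1) ∧
    (L[m - 1]? = some Step.right → ((L.drop m).take (k - 1)).count Step.down = d) := by
  subst hd hL
  have hk' : k = w.length + 1 := by omega
  subst hk'
  simp only [Nat.add_sub_cancel] at *
  rcases Nat.lt_or_ge m (w.length + 1) with hlt | hge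
  · -- case m ≤ w.length
    have hm : m ≤ w.length := by omega
    have hi : m - 1 < w.length := by omega
    have hget : (w ++ [Step.right] ++ w)[m - 1]? = some w[m - 1] := by
      rw [List.append_assoc, List.getElem?_append, if_pos hi, List.getElem?_eq_getElem hi]
    -- compute the window
    have hdrop : (w ++ [Step.right] ++ w).drop m = w.drop m ++ ([Step.right] ++ w) := by
      rw [List.append_assoc, List.drop_append]
      have h0 : m - w.length = 0 := by omega
      rw [h0, List.drop_zero]
    have hlen : (w.drop m).length = w.length - m := by simp
    have htake : ((w.drop m ++ ([Step.right] ++ w)).take w.length)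
        = w.drop m ++ (Step.right :: w.take (m - 1)) := by
      rw [List.take_append, List.take_of_length_le (by omega)]
      congr 1
      have : w.length - (w.drop m).length = m := by omega
      rw [this]
      cases m with
      | zero => omega
      | succ j => simp [List.take_succ_cons]
    have hwsplit : w.drop (m - 1) = w[m - 1] :: w.drop m := by
      have := List.drop_eq_getElem_cons hi
      simpa [Nat.sub_add_cancel hm1] using this
    have hcount : w.count Step.down
        = (w.take (m - 1)).count Step.down + (w[m-1] :: w.drop m).count Step.down := by
      conv_lhs => rw [← List.take_append_drop (m - 1) w]
      rw [List.count_append, hwsplit]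
    rw [hdrop, htake]
    constructor
    · intro h
      rw [hget] at h
      have hdn : w[m - 1] = Step.down := by simpa using h
      rw [hdn, List.count_cons_self] at hcount
      rw [List.count_append, List.count_cons_of_ne (by simp)]
      omega
    · intro h
      rw [hget] at h
      have hdn : w[m - 1] = Step.right := by simpa using h
      rw [hdn] at hcount
      rw [List.count_cons_of_ne (by simp)] at hcount
      rw [List.count_append, List.count_cons_of_ne (by simp)]
      omega
  · -- case m = w.length + 1
    have hm : m = w.length + 1 := by omega
    subst hm
    have hget : (w ++ [Step.right] ++ w)[w.length + 1 - 1]? = some Step.right := by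
      rw [show w.length + 1 - 1 = w.length from rfl, List.append_assoc,
        List.getElem?_append_right (le_refl _), Nat.sub_self]
      simp
    have hdrop : (w ++ [Step.right] ++ w).drop (w.length + 1) = w := by
      have : (w ++ [Step.right]).length = w.length + 1 := by simp
      rw [← this, List.drop_left]
    rw [hget, hdrop, List.take_length]
    constructor
    · intro h; simp at h
    · intro _; rfl
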